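/- arXiv:2001.00061 — 2 statements merged into one kernel-verified Lean document; each statement's English description precedes it below -/
import Mathlib

section
/- Let f be a rational Herglotz–Nevanlinna function with ind f ≥ 3, μ strictly less than the smallest pole of f, and f̂(λ) := (μ − λ)/(f(λ) − f(μ)) − f(μ). Then the finite poles of f and of f̂ interlace, and the smallest pole of f is strictly smaller than the smallest pole of f̂. -/
open scoped BigOperators

/-- A rational Herglotz–Nevanlinna function
`f(λ) = h₀ λ + h + ∑_{k=1}^d δ_k / (h_k − λ)`
with `h₀ ≥ 0`, `δ_k > 0` and `h₁ < … < h_d`. -/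
structure RHN where
  d : ℕ
  h0 : ℝ
  h : ℝ
  residue : Fin d → ℝ
  pole : Fin d → ℝ
  h0_nonneg : 0 ≤ h0
  residue_pos : ∀ k, 0 < residue k
  pole_strictMono : StrictMono pole

namespace RHN

/-- The value `f(λ)`. -/
noncomputable def eval (f : RHN) (x : ℝ) : ℝ :=
  f.h0 * x + f.h + ∑ k, f.residue k / (f.pole k - x)

/-- The index: `2d + 1` if `h₀ > 0`, and `2d` otherwise. -/
noncomputable def ind (f : RHN) : ℤ :=
  if 0 < f.h0 then 2 * f.d + 1 else 2 * f.d

end RHN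

/-! Since `f(λ) − f(μ) = (λ − μ) φ(λ)` with `φ(λ) = h₀ + ∑ δ_k / ((h_k − μ)(h_k − λ))`,
we have `f̂ = −1/φ − f(μ)`. The function `φ` runs from `−∞` to `+∞` on each gap
`(h_k, h_{k+1})` and from `−∞` to `h₀` on `(h_d, ∞)`, so it has a zero in each gap and, when
`h₀ > 0`, one more beyond `h_d`. Writing `φ = N / Q` with `Q = ∏ (λ − h_k)`, degree counting
shows that `N` is a constant `L` times the nodal polynomial `W` of these zeros, and the
partial fraction expansion of `Q / W` exhibits `−1/φ` as a rational Herglotz–Nevanlinna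
function whose poles are the zeros `w_j` of `φ`, with residues `1/φ'(w_j) > 0`. -/

open Polynomial Lagrange Finset Filter Topology

/-- `p 0 < q 0 < p 1 < q 1 < ⋯`, for as long as both sequences last. -/
def Interlaces {α : Type*} [Preorder α] {m n : ℕ} (p : Fin m → α) (q : Fin n → α) : Prop :=
  ∀ (i : Fin m) (j : Fin n),
    ((i : ℕ) ≤ (j : ℕ) → p i < q j) ∧ ((j : ℕ) < (i : ℕ) → q j < p i)

section Interlaces

variable {α : Type*} [Preorder α] {m n : ℕ} {p : Fin m → α} {q : Fin n → α}

theorem Interlaces.ne (h : Interlaces p q) (i : Fin m) (j : Fin n) : q j ≠ p i := by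
  rcases le_or_gt (i : ℕ) j with hij | hji
  · exact ((h i j).1 hij).ne'
  · exact ((h i j).2 hji).ne

theorem Interlaces.strictMono (h : Interlaces p q) (hnm : n ≤ m) : StrictMono q :=
  fun j j' hjj' => ((h ⟨j', by omega⟩ j).2 hjj').trans ((h ⟨j', by omega⟩ j').1 le_rfl)

end Interlaces

theorem Polynomial.eq_C_coeff_mul_nodal {F ι : Type*} [Field F] [Fintype ι] {v : ι → F}
    (hv : Function.Injective v) {p : F[X]} (hp : p.natDegree ≤ Fintype.card ι)
    (hroot : ∀ i, p.eval (v i) = 0) :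
    p = C (p.coeff (Fintype.card ι)) * nodal univ v := by
  refine eq_of_degree_sub_lt_of_eval_index_eq univ hv.injOn ?_ fun i _ => ?_
  · rw [card_univ, degree_lt_iff_coeff_zero]
    intro m hm
    have hW : (nodal univ v).natDegree = Fintype.card ι := by rw [natDegree_nodal, card_univ]
    rw [coeff_sub, coeff_C_mul, sub_eq_zero]
    rcases hm.eq_or_lt with rfl | hlt
    · rw [← hW, nodal_monic.coeff_natDegree, hW, mul_one]
    · rw [coeff_eq_zero_of_natDegree_lt (hp.trans_lt hlt),
        coeff_eq_zero_of_natDegree_lt (hW.trans_lt hlt), mul_zero]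
  · rw [eval_mul, eval_nodal_at_node (mem_univ i), mul_zero, hroot]

theorem Lagrange.eval_div_nodal {F ι : Type*} [Field F] [Fintype ι] [DecidableEq ι]
    {v : ι → F} (hv : Function.Injective v) (p : F[X]) {x : F} (hx : ∀ i, x ≠ v i) :
    p.eval x / (nodal univ v).eval x =
      (p /ₘ nodal univ v).eval x + ∑ i, nodalWeight univ v i * p.eval (v i) / (x - v i) := by
  have hrem : p %ₘ nodal univ v = interpolate univ v (fun i => p.eval (v i)) := by
    refine eq_interpolate_of_eval_eq _ hv.injOn ?_ fun i hi => ?_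
    · rw [← degree_nodal (s := univ) (v := v)]
      exact degree_modByMonic_lt _ nodal_monic
    · conv_rhs => rw [← modByMonic_add_div p (nodal univ v)]
      rw [eval_add, eval_mul, eval_nodal_at_node hi, zero_mul, add_zero]
  have hW : (nodal univ v).eval x ≠ 0 := eval_nodal_not_at_node fun i _ => hx i
  conv_lhs => rw [← modByMonic_add_div p (nodal univ v)]
  rw [hrem, eval_add, eval_interpolate_not_at_node _ fun i _ => hx i, eval_mul, ← mul_add,
    mul_div_cancel_left₀ _ hW, add_comm]
  congr 1
  refine sum_congr rfl fun i _ => ?_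
  rw [div_eq_mul_inv]; ring

namespace RHN

variable (f : RHN)

theorem continuousAt_eval {x : ℝ} (hx : ∀ k, x ≠ f.pole k) : ContinuousAt f.eval x := by
  unfold eval
  fun_prop (disch := exact sub_ne_zero.2 (hx _).symm)

theorem hasDerivAt_eval {x : ℝ} (hx : ∀ k, x ≠ f.pole k) :
    HasDerivAt f.eval (f.h0 + ∑ k, f.residue k / (f.pole k - x) ^ 2) x := by
  have hterm : ∀ k ∈ univ, HasDerivAt (fun y => f.residue k / (f.pole k - y))
      (f.residue k / (f.pole k - x) ^ 2) x := fun k _ => by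
    simpa [div_eq_mul_inv] using ((hasDerivAt_id x).const_sub (f.pole k)).fun_inv
      (sub_ne_zero.2 (hx k).symm) |>.const_mul (f.residue k)
  exact ((hasDerivAt_id x).const_mul f.h0 |>.add_const f.h).add (HasDerivAt.fun_sum hterm)
    |>.congr_deriv (by simp)

theorem eval_eq_add_sum_erase (k : Fin f.d) (x : ℝ) :
    f.eval x = f.residue k / (f.pole k - x) +
      (f.h0 * x + f.h + ∑ j ∈ univ.erase k, f.residue j / (f.pole j - x)) := by
  rw [eval, ← add_sum_erase _ _ (mem_univ k)]; ring

theorem continuousAt_eval_erase_pole (k : Fin f.d) :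
    ContinuousAt (fun x => f.h0 * x + f.h + ∑ j ∈ univ.erase k, f.residue j / (f.pole j - x))
      (f.pole k) := by
  have hne : ∀ j ∈ univ.erase k, f.pole j - f.pole k ≠ 0 := fun j hj =>
    sub_ne_zero.2 (f.pole_strictMono.injective.ne (ne_of_mem_erase hj))
  have hsum : ContinuousAt (fun x => ∑ j ∈ univ.erase k, f.residue j / (f.pole j - x))
      (f.pole k) := tendsto_finsetSum _ fun j hj =>
    continuousAt_const.div (continuousAt_const.sub continuousAt_id) (hne j hj)
  exact ((continuousAt_const.mul continuousAt_id).add continuousAt_const).add hsum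

theorem tendsto_eval_nhdsGT_pole (k : Fin f.d) : Tendsto f.eval (𝓝[>] f.pole k) atBot := by
  have hsub : Tendsto (fun x => f.pole k - x) (𝓝[>] f.pole k) (𝓝[<] 0) :=
    tendsto_nhdsWithin_of_tendsto_nhds_of_eventually_within _
      ((continuous_sub_left _).tendsto' _ _ (sub_self _) |>.mono_left nhdsWithin_le_nhds)
      (eventually_nhdsWithin_of_forall fun _ hx => Set.mem_Iio.2 (sub_neg.2 hx))
  simp_rw [funext (f.eval_eq_add_sum_erase k), div_eq_mul_inv]
  exact ((tendsto_inv_nhdsLT_zero.comp hsub).const_mul_atBot (f.residue_pos k)).atBot_add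
    ((f.continuousAt_eval_erase_pole k).tendsto.mono_left nhdsWithin_le_nhds)

theorem tendsto_eval_nhdsLT_pole (k : Fin f.d) : Tendsto f.eval (𝓝[<] f.pole k) atTop := by
  have hsub : Tendsto (fun x => f.pole k - x) (𝓝[<] f.pole k) (𝓝[>] 0) :=
    tendsto_nhdsWithin_of_tendsto_nhds_of_eventually_within _
      ((continuous_sub_left _).tendsto' _ _ (sub_self _) |>.mono_left nhdsWithin_le_nhds)
      (eventually_nhdsWithin_of_forall fun _ hx => Set.mem_Ioi.2 (sub_pos.2 hx))
  simp_rw [funext (f.eval_eq_add_sum_erase k), div_eq_mul_inv]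
  exact ((tendsto_inv_nhdsGT_zero.comp hsub).const_mul_atTop (f.residue_pos k)).atTop_add
    ((f.continuousAt_eval_erase_pole k).tendsto.mono_left nhdsWithin_le_nhds)

theorem tendsto_eval_atTop (hf0 : f.h0 = 0) : Tendsto f.eval atTop (𝓝 f.h) := by
  have hterm : ∀ k ∈ univ, Tendsto (fun x => f.residue k / (f.pole k - x)) atTop (𝓝 0) :=
    fun k _ => tendsto_const_nhds.div_atBot
      (tendsto_atBot_add_const_left _ _ tendsto_neg_atTop_atBot)
  have hlim := (tendsto_finsetSum univ hterm).const_add f.h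
  rw [sum_const_zero, add_zero] at hlim
  exact hlim.congr fun x => by simp [eval, hf0]

theorem ne_pole_of_pole_lt {k : Fin f.d} {y : ℝ} (hk : f.pole k < y)
    (hy : ∀ i, k < i → y < f.pole i) (i : Fin f.d) : y ≠ f.pole i := by
  rcases le_or_gt i k with hik | hki
  · exact ((f.pole_strictMono.monotone hik).trans_lt hk).ne'
  · exact (hy i hki).ne

theorem exists_zero_between_poles (k : Fin f.d) (hk : (k : ℕ) + 1 < f.d) :
    ∃ y, f.pole k < y ∧ (∀ i, k < i → y < f.pole i) ∧ f.eval y = 0 := by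
  let k' : Fin f.d := ⟨k + 1, hk⟩
  have hlt : f.pole k < f.pole k' := f.pole_strictMono (Nat.lt_succ_self _)
  have hnext : ∀ i, k < i → f.pole k' ≤ f.pole i := fun i hi =>
    f.pole_strictMono.monotone (show k' ≤ i from hi)
  have hcont : ContinuousOn f.eval (Set.Ioo (f.pole k) (f.pole k')) := fun y hy =>
    (f.continuousAt_eval (f.ne_pole_of_pole_lt hy.1 fun i hi =>
      hy.2.trans_le (hnext i hi))).continuousWithinAt
  obtain ⟨y, hy, hy0⟩ := isPreconnected_Ioo.intermediate_value_Iii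
    (le_principal_iff.2 (Ioo_mem_nhdsGT hlt)) (le_principal_iff.2 (Ioo_mem_nhdsLT hlt)) hcont
    (f.tendsto_eval_nhdsGT_pole k) (f.tendsto_eval_nhdsLT_pole k') (Set.mem_univ 0)
  exact ⟨y, hy.1, fun i hi => hy.2.trans_le (hnext i hi), hy0⟩

theorem exists_zero_above_last_pole (hf0 : f.h0 = 0) (hh : 0 < f.h) (k : Fin f.d)
    (hk : (k : ℕ) + 1 = f.d) :
    ∃ y, f.pole k < y ∧ (∀ i, k < i → y < f.pole i) ∧ f.eval y = 0 := by
  have hlast : ∀ i, ¬ k < i := fun i hi => by have := i.2; rw [Fin.lt_def] at hi; omega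
  have hcont : ContinuousOn f.eval (Set.Ioi (f.pole k)) := fun y hy =>
    (f.continuousAt_eval (f.ne_pole_of_pole_lt hy fun i hi =>
      absurd hi (hlast i))).continuousWithinAt
  obtain ⟨y, hy, hy0⟩ := isPreconnected_Ioi.intermediate_value_Iio
    (le_principal_iff.2 self_mem_nhdsWithin) (le_principal_iff.2 (Ioi_mem_atTop _)) hcont
    (f.tendsto_eval_nhdsGT_pole k) (f.tendsto_eval_atTop hf0) (Set.mem_Iio.2 hh)
  exact ⟨y, hy, fun i hi => absurd hi (hlast i), hy0⟩

theorem exists_interlacing_zeros (hf0 : f.h0 = 0) {e : ℕ}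
    (he : e + 1 = f.d ∨ e = f.d ∧ 0 < f.h) :
    ∃ w : Fin e → ℝ, (∀ j, f.eval (w j) = 0) ∧ Interlaces f.pole w := by
  have hed : e ≤ f.d := by omega
  have hzero : ∀ j : Fin e, ∃ y, f.pole (Fin.castLE hed j) < y ∧
      (∀ i, Fin.castLE hed j < i → y < f.pole i) ∧ f.eval y = 0 := fun j => by
    by_cases hj : (j : ℕ) + 1 < f.d
    · exact f.exists_zero_between_poles _ hj
    · exact f.exists_zero_above_last_pole hf0 (he.resolve_left (by omega)).2 _ (by simp; omega)
  choose w hw_gt hw_lt hw_zero using hzero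
  refine ⟨w, hw_zero, fun i j => ⟨fun hij => ?_, hw_lt j i⟩⟩
  exact (f.pole_strictMono.monotone hij).trans_lt (hw_gt j)

noncomputable def denom : ℝ[X] := nodal univ f.pole

noncomputable def residuePoly : ℝ[X] := ∑ k, C (f.residue k) * nodal (univ.erase k) f.pole

noncomputable def numer : ℝ[X] := (C f.h0 * X + C f.h) * f.denom - f.residuePoly

theorem eval_numer {x : ℝ} (hx : ∀ k, x ≠ f.pole k) :
    f.numer.eval x = f.eval x * f.denom.eval x := by
  have hterm : ∀ k ∈ univ, f.residue k / (f.pole k - x) * f.denom.eval x =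
      -(f.residue k * (nodal (univ.erase k) f.pole).eval x) := fun k _ => by
    rw [denom, eval_nodal, eval_nodal, ← mul_prod_erase _ _ (mem_univ k)]
    field_simp [sub_ne_zero.2 (hx k).symm]
    ring
  simp only [numer, residuePoly, eval_sub, eval_mul, eval_add, eval_C, eval_X, eval_finsetSum]
  rw [eval, add_mul, add_mul, sum_mul, sum_congr rfl hterm, sum_neg_distrib]
  ring

theorem eval_derivative_numer {x : ℝ} (hx : ∀ k, x ≠ f.pole k) (hfx : f.eval x = 0) :
    f.numer.derivative.eval x =
      (f.h0 + ∑ k, f.residue k / (f.pole k - x) ^ 2) * f.denom.eval x := by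
  have heq : (fun y => f.numer.eval y) =ᶠ[𝓝 x] fun y => f.eval y * f.denom.eval y :=
    (eventually_all.2 fun k => eventually_ne_nhds (hx k)).mono fun y hy => f.eval_numer hy
  rw [(f.numer.hasDerivAt x).unique
    (((f.hasDerivAt_eval hx).mul (f.denom.hasDerivAt x)).congr_of_eventuallyEq heq), hfx,
    zero_mul, add_zero]

theorem natDegree_nodal_erase (k : Fin f.d) :
    (nodal (univ.erase k) f.pole).natDegree = f.d - 1 := by
  rw [natDegree_nodal, card_erase_of_mem (mem_univ k), card_univ, Fintype.card_fin]

theorem natDegree_residuePoly_le : f.residuePoly.natDegree ≤ f.d - 1 :=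
  natDegree_sum_le_of_forall_le _ _ fun k _ =>
    (natDegree_C_mul_le _ _).trans (f.natDegree_nodal_erase k).le

theorem coeff_residuePoly_d_sub_one : f.residuePoly.coeff (f.d - 1) = ∑ k, f.residue k := by
  rw [residuePoly, finsetSum_coeff]
  refine sum_congr rfl fun k _ => ?_
  rw [coeff_C_mul, ← f.natDegree_nodal_erase k, nodal_monic.coeff_natDegree, mul_one]

theorem coeff_residuePoly_d_eq_zero : f.residuePoly.coeff f.d = 0 := by
  rw [residuePoly, finsetSum_coeff]
  refine sum_eq_zero fun k _ => coeff_eq_zero_of_natDegree_lt ?_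
  have := k.2
  exact (natDegree_C_mul_le _ _).trans_lt ((f.natDegree_nodal_erase k).trans_lt (by omega))

theorem monic_denom : f.denom.Monic := nodal_monic

theorem natDegree_denom : f.denom.natDegree = f.d := by
  rw [denom, natDegree_nodal, card_univ, Fintype.card_fin]

theorem numer_eq_C_mul_nodal_of_h0_eq_zero (hf0 : f.h0 = 0) {w : Fin f.d → ℝ}
    (hw : Function.Injective w) (hroot : ∀ j, f.numer.eval (w j) = 0) :
    f.numer = C f.h * nodal univ w := by
  have hN : f.numer = C f.h * f.denom - f.residuePoly := by simp [numer, hf0]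
  have hlead : f.numer.coeff f.d = f.h := by
    rw [hN, coeff_sub, coeff_C_mul, ← f.natDegree_denom, f.monic_denom.coeff_natDegree,
      f.natDegree_denom, f.coeff_residuePoly_d_eq_zero, mul_one, sub_zero]
  have hdeg : f.numer.natDegree ≤ f.d := by
    rw [hN]
    exact (natDegree_sub_le _ _).trans (max_le ((natDegree_C_mul_le _ _).trans
      f.natDegree_denom.le) (f.natDegree_residuePoly_le.trans (Nat.sub_le _ _)))
  rw [← Fintype.card_fin f.d] at hdeg
  rw [eq_C_coeff_mul_nodal hw hdeg hroot, Fintype.card_fin, hlead]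

theorem numer_eq_C_mul_nodal_of_h_eq_zero (hf0 : f.h0 = 0) (hh : f.h = 0)
    {w : Fin (f.d - 1) → ℝ} (hw : Function.Injective w)
    (hroot : ∀ j, f.numer.eval (w j) = 0) :
    f.numer = C (-∑ k, f.residue k) * nodal univ w := by
  have hN : f.numer = -f.residuePoly := by simp [numer, hf0, hh]
  have hdeg : f.numer.natDegree ≤ Fintype.card (Fin (f.d - 1)) := by
    rw [hN, natDegree_neg, Fintype.card_fin]; exact f.natDegree_residuePoly_le
  rw [eq_C_coeff_mul_nodal hw hdeg hroot, Fintype.card_fin, hN, coeff_neg,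
    f.coeff_residuePoly_d_sub_one]

/-- The residue is `1 / f'(w j)`: at a zero of `f`, `numer' = f' * denom` and
`numer' = L * (nodal univ w)'`. -/
theorem nodalWeight_mul_eval_denom_div_pos (hd : 1 ≤ f.d) {e : ℕ} {w : Fin e → ℝ}
    (hw : Interlaces f.pole w) {L : ℝ} (hN : f.numer = C L * nodal univ w) (j : Fin e) :
    0 < nodalWeight univ w j * f.denom.eval (w j) / L := by
  have hpole : ∀ k, w j ≠ f.pole k := fun k => hw.ne k j
  have hD : f.denom.eval (w j) ≠ 0 := eval_nodal_not_at_node fun k _ => hpole k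
  have hzero : f.eval (w j) = 0 := by
    have hNw := f.eval_numer hpole
    rw [hN, eval_mul, eval_nodal_at_node (mem_univ j), mul_zero, eq_comm] at hNw
    exact (mul_eq_zero.1 hNw).resolve_right hD
  have hderiv := f.eval_derivative_numer hpole hzero
  rw [hN, derivative_C_mul, eval_mul, eval_C] at hderiv
  have hslope : 0 < f.h0 + ∑ k, f.residue k / (f.pole k - w j) ^ 2 :=
    add_pos_of_nonneg_of_pos f.h0_nonneg (sum_pos (fun k _ => div_pos (f.residue_pos k)
      (sq_pos_of_ne_zero (sub_ne_zero.2 (hpole k).symm))) ⟨⟨0, hd⟩, mem_univ _⟩)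
  rw [nodalWeight_eq_eval_derivative_nodal (mem_univ j),
    show ∀ a b c : ℝ, a⁻¹ * b / c = b / (c * a) by intros; ring, hderiv,
    div_mul_cancel_right₀ hD]
  exact inv_pos.2 hslope

theorem natDegree_denom_divByMonic {e : ℕ} (w : Fin e → ℝ) :
    (f.denom /ₘ nodal univ w).natDegree = f.d - e := by
  rw [natDegree_divByMonic _ nodal_monic, natDegree_denom, natDegree_nodal, card_univ,
    Fintype.card_fin]

theorem coeff_one_denom_divByMonic {e : ℕ} {w : Fin e → ℝ} (hed : e ≤ f.d)
    (hde : f.d ≤ e + 1) :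
    (f.denom /ₘ nodal univ w).coeff 1 = if e < f.d then 1 else 0 := by
  have hdeg := f.natDegree_denom_divByMonic w
  split_ifs with hlt
  · rw [show 1 = (f.denom /ₘ nodal univ w).natDegree by omega, ← leadingCoeff,
      leadingCoeff_divByMonic_of_monic nodal_monic, f.monic_denom.leadingCoeff]
    rw [degree_nodal, card_univ, Fintype.card_fin, degree_eq_natDegree f.monic_denom.ne_zero,
      natDegree_denom]
    exact_mod_cast hed
  · exact coeff_eq_zero_of_natDegree_lt (by omega)

theorem exists_eval_eq_neg_inv_of_numer_eq (hd : 1 ≤ f.d) {e : ℕ} (hed : e ≤ f.d)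
    (hde : f.d ≤ e + 1) {w : Fin e → ℝ} (hw : Interlaces f.pole w) {L : ℝ}
    (hLneg : e < f.d → L < 0)
    (hN : f.numer = C L * nodal univ w) :
    ∃ g : RHN, g.d = e ∧ (0 < g.h0 ↔ e < f.d) ∧ Interlaces f.pole g.pole ∧
      ∀ x, (∀ k, x ≠ f.pole k) → (∀ j, x ≠ g.pole j) → g.eval x = -1 / f.eval x := by
  set T := f.denom /ₘ nodal univ w
  have hT1 := f.coeff_one_denom_divByMonic (w := w) hed hde
  have hh0 : 0 ≤ -T.coeff 1 / L ∧ (0 < -T.coeff 1 / L ↔ e < f.d) := by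
    rw [hT1]
    split_ifs with hlt
    · have := div_pos_of_neg_of_neg neg_one_lt_zero (hLneg hlt)
      exact ⟨this.le, iff_of_true this hlt⟩
    · simp [hlt]
  refine ⟨⟨e, -T.coeff 1 / L, -T.coeff 0 / L,
    fun j => nodalWeight univ w j * f.denom.eval (w j) / L, w, hh0.1,
    f.nodalWeight_mul_eval_denom_div_pos hd hw hN, hw.strictMono hed⟩,
    rfl, hh0.2, hw, fun x hx hxw => ?_⟩
  have hD : f.denom.eval x ≠ 0 := eval_nodal_not_at_node fun k _ => hx k
  have hT : T.eval x = T.coeff 1 * x + T.coeff 0 := by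
    conv_lhs => rw [eq_X_add_C_of_natDegree_le_one (p := T)
      ((f.natDegree_denom_divByMonic w).trans_le (by omega))]
    simp
  have hsum : ∑ j, nodalWeight univ w j * f.denom.eval (w j) / L / (w j - x) =
      -(∑ j, nodalWeight univ w j * f.denom.eval (w j) / (x - w j)) / L := by
    rw [neg_div, sum_div, ← sum_neg_distrib]
    refine sum_congr rfl fun j _ => ?_
    rw [← neg_sub x (w j), div_neg]
    ring
  have hinv : -1 / f.eval x = -(f.denom.eval x / f.numer.eval x) := by
    rw [f.eval_numer hx, div_mul_cancel_right₀ hD, neg_div, one_div]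
  rw [hinv, hN, eval_mul, eval_C, div_mul_eq_div_div_swap,
    eval_div_nodal (hw.strictMono hed).injective _ hxw, hT]
  change -T.coeff 1 / L * x + -T.coeff 0 / L + ∑ j, _ / (w j - x) = _
  rw [hsum]
  ring

theorem exists_eval_eq_neg_inv (hf0 : f.h0 = 0) (hh : 0 ≤ f.h) (hd : 1 ≤ f.d) :
    ∃ g : RHN, g.ind + 1 = 2 * f.d + (if 0 < f.h then 1 else 0) ∧ Interlaces f.pole g.pole ∧
      ∀ x, (∀ k, x ≠ f.pole k) → (∀ j, x ≠ g.pole j) → g.eval x = -1 / f.eval x := by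
  have hroot : ∀ {e} {w : Fin e → ℝ}, Interlaces f.pole w → (∀ j, f.eval (w j) = 0) →
      ∀ j, f.numer.eval (w j) = 0 := fun hw hw0 j => by
    rw [f.eval_numer fun k => hw.ne k j, hw0, zero_mul]
  rcases hh.lt_or_eq with hpos | hzero
  · obtain ⟨w, hw0, hw⟩ := f.exists_interlacing_zeros hf0 (Or.inr ⟨rfl, hpos⟩)
    obtain ⟨g, hgd, hgh0, hgw, hg⟩ :=
      f.exists_eval_eq_neg_inv_of_numer_eq hd le_rfl (by omega) hw (fun h => absurd h (lt_irrefl _))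
      (f.numer_eq_C_mul_nodal_of_h0_eq_zero hf0 (hw.strictMono le_rfl).injective (hroot hw hw0))
    refine ⟨g, ?_, hgw, hg⟩
    rw [ind, if_neg (hgh0.not.2 (lt_irrefl _)), if_pos hpos, hgd]
  · obtain ⟨w, hw0, hw⟩ := f.exists_interlacing_zeros hf0 (e := f.d - 1) (Or.inl (by omega))
    have hsum : 0 < ∑ k, f.residue k :=
      sum_pos (fun k _ => f.residue_pos k) ⟨⟨0, hd⟩, mem_univ _⟩
    obtain ⟨g, hgd, hgh0, hgw, hg⟩ := f.exists_eval_eq_neg_inv_of_numer_eq hd (Nat.sub_le _ _)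
      (by omega) hw (fun _ => neg_lt_zero.2 hsum)
      (f.numer_eq_C_mul_nodal_of_h_eq_zero hf0 hzero.symm
        (hw.strictMono (Nat.sub_le _ _)).injective (hroot hw hw0))
    refine ⟨g, ?_, hgw, hg⟩
    rw [ind, if_pos (hgh0.2 (by omega)), ← hzero, if_neg (lt_irrefl _), hgd]
    push_cast [hd]
    ring

theorem one_le_d_of_two_le_ind (hf : 2 ≤ f.ind) : 1 ≤ f.d := by
  unfold ind at hf
  split_ifs at hf <;> omega

noncomputable def slope (μ : ℝ) (hμ : ∀ k, μ < f.pole k) : RHN where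
  d := f.d
  h0 := 0
  h := f.h0
  residue k := f.residue k / (f.pole k - μ)
  pole := f.pole
  h0_nonneg := le_rfl
  residue_pos k := div_pos (f.residue_pos k) (sub_pos.2 (hμ k))
  pole_strictMono := f.pole_strictMono

theorem eval_sub_eval_eq_mul_slope {μ : ℝ} (hμ : ∀ k, μ < f.pole k) {x : ℝ}
    (hx : ∀ k, x ≠ f.pole k) : f.eval x - f.eval μ = (x - μ) * (f.slope μ hμ).eval x := by
  simp only [eval, slope, zero_mul, zero_add, mul_add, mul_sum]
  rw [add_sub_add_comm, ← sum_sub_distrib]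
  congr 1
  · ring
  · refine sum_congr rfl fun k _ => ?_
    have := sub_ne_zero.2 (hx k).symm
    have := (sub_pos.2 (hμ k)).ne'
    field_simp
    ring

end RHN

/-- if `ind f ≥ 3` and `μ` is smaller than the smallest pole of `f`, then the
finite poles of `f` and of `f̂(λ) = (μ − λ)/(f(λ) − f(μ)) − f(μ)` interlace each other
(in the merged order `h₁ < ĥ₁ < h₂ < ĥ₂ < …`), and the smallest pole of `f` is strictly
smaller than the smallest pole of `f̂`. -/
theorem hat_transform_poles_interlace (f : RHN) (μ : ℝ)
    (hμ : ∀ k, μ < f.pole k) (hind : 3 ≤ f.ind) :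
    ∃ g : RHN, g.ind = f.ind - 1 ∧
      (∀ x : ℝ, x ≠ μ → (∀ k, x ≠ f.pole k) → (∀ k, x ≠ g.pole k) →
        g.eval x = (μ - x) / (f.eval x - f.eval μ) - f.eval μ) ∧
      1 ≤ f.d ∧ 1 ≤ g.d ∧
      (∀ (i : Fin f.d) (j : Fin g.d),
        ((i : ℕ) ≤ (j : ℕ) → f.pole i < g.pole j) ∧
        ((j : ℕ) < (i : ℕ) → g.pole j < f.pole i)) := by
  have hd := f.one_le_d_of_two_le_ind (by omega)
  obtain ⟨g, hind_g, hinter, heval⟩ :=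
    (f.slope μ hμ).exists_eval_eq_neg_inv rfl f.h0_nonneg hd
  have hind_eq : g.ind = f.ind - 1 := by
    change _ = 2 * (f.d : ℤ) + (if 0 < f.h0 then 1 else 0) at hind_g
    unfold RHN.ind at hind_g ⊢
    split_ifs at hind_g ⊢ <;> omega
  refine ⟨{ g with h := g.h - f.eval μ }, hind_eq, fun x hxμ hx hxg => ?_, hd,
    g.one_le_d_of_two_le_ind (by omega), hinter⟩
  have hshift : RHN.eval { g with h := g.h - f.eval μ } x = g.eval x - f.eval μ := by
    simp only [RHN.eval]; ring
  rw [hshift, heval x hx hxg, f.eval_sub_eval_eq_mul_slope hμ hx, ← neg_sub x μ, neg_div,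
    neg_div, div_mul_cancel_left₀ (sub_ne_zero.2 hxμ), one_div]
end

section
/- Let f be a rational Herglotz–Nevanlinna function written as f = f↑/f↓, let μ be less than the smallest pole of f and τ > f(μ), and set f̃(λ) := (μ − λ)/(f(λ) − τ) − τ. Then f̃↑(λ) = τ f↑(λ) + (λ − μ − τ²) f↓(λ) and f̃↓(λ) = −f↑(λ) + τ f↓(λ). -/
open scoped BigOperators

namespace RHN

open Polynomial

/-- `h₀′ := 1/h₀` if `h₀ > 0`, and `1` otherwise. -/
noncomputable def h0' (f : RHN) : ℝ := if 0 < f.h0 then 1 / f.h0 else 1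

/-- The denominator polynomial `f↓(λ) := h₀′ ∏_{k=1}^d (h_k − λ)`. -/
noncomputable def pdown (f : RHN) : Polynomial ℝ :=
  C f.h0' * ∏ k, (C (f.pole k) - X)

/-- The numerator polynomial `f↑ := f · f↓`, written out explicitly. -/
noncomputable def pup (f : RHN) : Polynomial ℝ :=
  C f.h0' * ((C f.h0 * X + C f.h) * ∏ k, (C (f.pole k) - X)
    + ∑ k, C (f.residue k) * ∏ j ∈ Finset.univ.erase k, (C (f.pole j) - X))

end RHN


/-!
Both `(g↑, g↓)` and `(τ f↑ + (λ − μ − τ²) f↓, −f↑ + τ f↓)` are coprime pairs representing `f̃`: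
the second because its Möbius matrix has determinant `λ − μ` while `−f↑ + τ f↓` equals
`(τ − f(μ)) f↓(μ) ≠ 0` at `μ`. Hence they differ by a constant factor `c`. Both pairs are
normalised alike: the leading coefficient of the numerator if it has the larger degree, and of
the denominator otherwise, is `(−1)^n` with `n` the degree of the denominator. For `(f↑, f↓)` this is what the
factor `h₀′` achieves; for the transformed pair it is a degree count, separately for `h₀ > 0`
and `h₀ = 0` (where `h ≤ f(μ) < τ` keeps the degree of `−f↑ + τ f↓` at `d`). So `c = 1`.
-/

open Polynomial

namespace Polynomial

variable {K : Type*} [Field K]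

theorem isCoprime_X_sub_C_of_eval_ne_zero {p : K[X]} {a : K} (h : p.eval a ≠ 0) :
    IsCoprime (X - C a) p :=
  (irreducible_of_degree_eq_one (degree_X_sub_C a)).coprime_iff_not_dvd.mpr
    (by rwa [dvd_iff_isRoot])

theorem C_sub_X_eq_neg (a : K) : (C a - X : K[X]) = -(X - C a) := by ring

theorem degree_prod_C_sub_X {ι : Type*} (s : Finset ι) (v : ι → K) :
    (∏ k ∈ s, (C (v k) - X)).degree = (s.card : WithBot ℕ) := by
  simp only [C_sub_X_eq_neg, degree_prod, degree_neg, degree_X_sub_C, Finset.sum_const, nsmul_one]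

theorem leadingCoeff_prod_C_sub_X {ι : Type*} (s : Finset ι) (v : ι → K) :
    (∏ k ∈ s, (C (v k) - X)).leadingCoeff = (-1) ^ s.card := by
  simp only [C_sub_X_eq_neg, leadingCoeff_prod, leadingCoeff_neg, (monic_X_sub_C _).leadingCoeff,
    Finset.prod_const]

theorem degree_C_mul_le (a : K) (p : K[X]) : (C a * p).degree ≤ p.degree := by
  rw [← smul_eq_C_mul]
  exact degree_smul_le a p

theorem exists_eq_C_mul_of_isCoprime {p q p' q' : K[X]} (hpq : IsCoprime p q)
    (hpq' : IsCoprime p' q') (hq : q ≠ 0) (h : p' * q = p * q') :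
    ∃ c : K, c ≠ 0 ∧ p' = C c * p ∧ q' = C c * q := by
  have hq'q : q' ∣ q := hpq'.symm.dvd_of_dvd_mul_left ⟨p, by rw [h, mul_comm]⟩
  have hqq' : q ∣ q' := hpq.symm.dvd_of_dvd_mul_left ⟨p', by rw [← h, mul_comm]⟩
  obtain ⟨w, hw⟩ := associated_of_dvd_dvd hqq' hq'q
  obtain ⟨c, hc, hcw⟩ := isUnit_iff.mp w.isUnit
  have hq' : q' = C c * q := by rw [← hw, hcw, mul_comm]
  refine ⟨c, hc.ne_zero, mul_right_cancel₀ hq ?_, hq'⟩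
  rw [h, hq']
  ring

/-- The leading coefficient of the pair `(p, q)` viewed as the rational function `p / q`:
that of `p` if `p / q` has a pole at infinity, and that of `q` otherwise. -/
noncomputable def pairLeadingCoeff (p q : K[X]) : K :=
  if q.degree < p.degree then p.leadingCoeff else q.leadingCoeff

theorem pairLeadingCoeff_C_mul {c : K} (hc : c ≠ 0) (p q : K[X]) :
    pairLeadingCoeff (C c * p) (C c * q) = c * pairLeadingCoeff p q := by
  simp only [pairLeadingCoeff, degree_C_mul hc, leadingCoeff_mul, leadingCoeff_C]
  split_ifs <;> rfl

theorem eq_of_isCoprime_of_pairLeadingCoeff {p q p' q' : K[X]} (hpq : IsCoprime p q)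
    (hpq' : IsCoprime p' q') (hq : q ≠ 0) (h : p' * q = p * q')
    (hn : pairLeadingCoeff p q = (-1) ^ q.natDegree)
    (hn' : pairLeadingCoeff p' q' = (-1) ^ q'.natDegree) :
    p' = p ∧ q' = q := by
  obtain ⟨c, hc, rfl, rfl⟩ := exists_eq_C_mul_of_isCoprime hpq hpq' hq h
  rw [pairLeadingCoeff_C_mul hc, hn, natDegree_C_mul hc] at hn'
  obtain rfl : c = 1 := by
    simpa using mul_right_cancel₀ (pow_ne_zero _ (neg_ne_zero.mpr one_ne_zero))
      (hn'.trans (one_mul _).symm)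
  simp

end Polynomial

namespace RHN

variable (f : RHN)

theorem h0'_pos : 0 < f.h0' := by
  unfold h0'
  split_ifs <;> positivity

theorem h0'_eq_one_of_h0_eq_zero (h : f.h0 = 0) : f.h0' = 1 := by
  simp [h0', h]

theorem h0_mul_h0'_of_pos (h : 0 < f.h0) : f.h0 * f.h0' = 1 := by
  simp [h0', h, h.ne']

theorem degree_pdown : f.pdown.degree = f.d := by
  rw [pdown, degree_C_mul f.h0'_pos.ne', degree_prod_C_sub_X, Finset.card_univ, Fintype.card_fin]

theorem natDegree_pdown : f.pdown.natDegree = f.d :=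
  natDegree_eq_of_degree_eq_some f.degree_pdown

theorem leadingCoeff_pdown : f.pdown.leadingCoeff = f.h0' * (-1) ^ f.d := by
  rw [pdown, leadingCoeff_mul, leadingCoeff_C, leadingCoeff_prod_C_sub_X, Finset.card_univ,
    Fintype.card_fin]

noncomputable def residuePart : ℝ[X] :=
  C f.h0' * ∑ k, C (f.residue k) * ∏ j ∈ Finset.univ.erase k, (C (f.pole j) - X)

theorem pup_eq : f.pup = (C f.h0 * X + C f.h) * f.pdown + f.residuePart := by
  rw [pup, pdown, residuePart]
  ring

theorem degree_residuePart_lt : f.residuePart.degree < f.d := by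
  rw [residuePart, degree_C_mul f.h0'_pos.ne']
  refine (degree_sum_le _ _).trans_lt ((Finset.sup_lt_iff (WithBot.bot_lt_coe _)).mpr ?_)
  intro k _
  rw [degree_C_mul (f.residue_pos k).ne', degree_prod_C_sub_X,
    Finset.card_erase_of_mem (Finset.mem_univ k), Finset.card_univ, Fintype.card_fin]
  exact_mod_cast Nat.sub_lt k.pos one_pos

theorem degree_affine_mul_pdown_of_pos (h : 0 < f.h0) :
    ((C f.h0 * X + C f.h) * f.pdown).degree = ↑(f.d + 1) := by
  rw [degree_mul, degree_linear h.ne', degree_pdown, add_comm]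
  rfl

theorem degree_residuePart_lt_affine_mul_pdown_of_pos (h : 0 < f.h0) :
    f.residuePart.degree < ((C f.h0 * X + C f.h) * f.pdown).degree := by
  rw [degree_affine_mul_pdown_of_pos f h]
  exact f.degree_residuePart_lt.trans (by exact_mod_cast f.d.lt_succ_self)

theorem degree_pup_of_pos (h : 0 < f.h0) : f.pup.degree = ↑(f.d + 1) := by
  rw [pup_eq, degree_add_eq_left_of_degree_lt (degree_residuePart_lt_affine_mul_pdown_of_pos f h),
    degree_affine_mul_pdown_of_pos f h]

theorem leadingCoeff_pup_of_pos (h : 0 < f.h0) : f.pup.leadingCoeff = (-1) ^ f.d := by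
  rw [pup_eq, leadingCoeff_add_of_degree_lt' (degree_residuePart_lt_affine_mul_pdown_of_pos f h),
    leadingCoeff_mul, leadingCoeff_linear h.ne', leadingCoeff_pdown, ← mul_assoc,
    h0_mul_h0'_of_pos f h, one_mul]

theorem pup_eq_of_h0_eq_zero (h : f.h0 = 0) : f.pup = C f.h * f.pdown + f.residuePart := by
  rw [pup_eq, h, C_0, zero_mul, zero_add]

theorem degree_pup_le_of_h0_eq_zero (h : f.h0 = 0) : f.pup.degree ≤ f.d := by
  rw [pup_eq_of_h0_eq_zero f h]
  refine (degree_add_le _ _).trans (max_le ?_ f.degree_residuePart_lt.le)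
  exact (degree_C_mul_le _ _).trans f.degree_pdown.le

theorem pairLeadingCoeff_pup_pdown :
    pairLeadingCoeff f.pup f.pdown = (-1) ^ f.pdown.natDegree := by
  rw [natDegree_pdown, pairLeadingCoeff]
  rcases f.h0_nonneg.lt_or_eq with h | h
  · rw [if_pos (by rw [degree_pup_of_pos f h, degree_pdown]; exact_mod_cast f.d.lt_succ_self),
      leadingCoeff_pup_of_pos f h]
  · rw [if_neg (by rw [degree_pdown]; exact not_lt.mpr (degree_pup_le_of_h0_eq_zero f h.symm)),
      leadingCoeff_pdown, h0'_eq_one_of_h0_eq_zero f h.symm, one_mul]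

theorem eval_pdown (x : ℝ) : f.pdown.eval x = f.h0' * ∏ k, (f.pole k - x) := by
  simp [pdown, eval_prod]

theorem eval_pdown_ne_zero {x : ℝ} (hx : ∀ k, x ≠ f.pole k) : f.pdown.eval x ≠ 0 := by
  rw [eval_pdown]
  exact mul_ne_zero f.h0'_pos.ne'
    (Finset.prod_ne_zero_iff.mpr fun k _ => sub_ne_zero.mpr (hx k).symm)

theorem eval_pup {x : ℝ} (hx : ∀ k, x ≠ f.pole k) :
    f.pup.eval x = f.eval x * f.pdown.eval x := by
  have hres : (∑ k, f.residue k / (f.pole k - x)) * ∏ j, (f.pole j - x)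
      = ∑ k, f.residue k * ∏ j ∈ Finset.univ.erase k, (f.pole j - x) := by
    rw [Finset.sum_mul]
    refine Finset.sum_congr rfl fun k _ => ?_
    rw [← Finset.mul_prod_erase _ _ (Finset.mem_univ k)]
    field_simp [sub_ne_zero.mpr (hx k).symm]
  simp only [pup, eval_mul, eval_add, eval_finsetSum, eval_prod, eval_C, eval_X, eval_sub]
  rw [RHN.eval, eval_pdown]
  linear_combination (-f.h0') * hres

/-- At a pole `h_k` only the `k`-th residue term of `f↑` survives. -/
theorem eval_pup_pole_ne_zero (k : Fin f.d) : f.pup.eval (f.pole k) ≠ 0 := by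
  have hprod : ∏ j, (f.pole j - f.pole k) = 0 :=
    Finset.prod_eq_zero (Finset.mem_univ k) (sub_self _)
  have hsum : ∑ i, f.residue i * ∏ j ∈ Finset.univ.erase i, (f.pole j - f.pole k)
      = f.residue k * ∏ j ∈ Finset.univ.erase k, (f.pole j - f.pole k) := by
    refine Finset.sum_eq_single k (fun i _ hik => ?_) (by simp)
    exact mul_eq_zero_of_right _ (Finset.prod_eq_zero
      (Finset.mem_erase.mpr ⟨Ne.symm hik, Finset.mem_univ k⟩) (sub_self _))
  simp only [pup, eval_mul, eval_add, eval_finsetSum, eval_prod, eval_C, eval_X, eval_sub]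
  rw [hprod, hsum, mul_zero, zero_add]
  refine mul_ne_zero f.h0'_pos.ne' (mul_ne_zero (f.residue_pos k).ne' ?_)
  refine Finset.prod_ne_zero_iff.mpr fun j hj => sub_ne_zero.mpr fun hjk => ?_
  exact (Finset.mem_erase.mp hj).1 (f.pole_strictMono.injective hjk)

theorem isCoprime_pup_pdown : IsCoprime f.pup f.pdown := by
  rw [pdown]
  refine IsCoprime.mul_right (isCoprime_one_right.of_isCoprime_of_dvd_right ?_)
    (IsCoprime.prod_right fun k _ => ?_)
  · exact isUnit_iff_dvd_one.mp (isUnit_C.mpr f.h0'_pos.ne'.isUnit)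
  · rw [C_sub_X_eq_neg]
    exact (isCoprime_X_sub_C_of_eval_ne_zero (f.eval_pup_pole_ne_zero k)).symm.neg_right

theorem add_le_eval {x : ℝ} (hx : ∀ k, x < f.pole k) : f.h0 * x + f.h ≤ f.eval x :=
  le_add_of_nonneg_right (Finset.sum_nonneg fun k _ =>
    (div_pos (f.residue_pos k) (sub_pos.mpr (hx k))).le)

variable (μ τ : ℝ)

/-- `f̃↑` for `f̃ = (μ − λ)/(f − τ) − τ`. -/
noncomputable def tildeUp : ℝ[X] := C τ * f.pup + (X - C μ - C (τ ^ 2)) * f.pdown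

/-- `f̃↓` for `f̃ = (μ − λ)/(f − τ) − τ`. -/
noncomputable def tildeDown : ℝ[X] := -f.pup + C τ * f.pdown

variable {f μ τ}

theorem eval_tildeUp {x : ℝ} (hx : ∀ k, x ≠ f.pole k) :
    (f.tildeUp μ τ).eval x = (τ * f.eval x + x - μ - τ ^ 2) * f.pdown.eval x := by
  simp only [tildeUp, eval_add, eval_mul, eval_sub, eval_C, eval_X, f.eval_pup hx]
  ring

theorem eval_tildeDown {x : ℝ} (hx : ∀ k, x ≠ f.pole k) :
    (f.tildeDown τ).eval x = (τ - f.eval x) * f.pdown.eval x := by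
  simp only [tildeDown, eval_add, eval_mul, eval_neg, eval_C, f.eval_pup hx]
  ring

theorem eval_tildeDown_ne_zero (hμ : ∀ k, μ < f.pole k) (hτ : f.eval μ < τ) :
    (f.tildeDown τ).eval μ ≠ 0 := by
  have hμ' : ∀ k, μ ≠ f.pole k := fun k => (hμ k).ne
  rw [eval_tildeDown hμ']
  exact mul_ne_zero (sub_ne_zero.mpr hτ.ne') (f.eval_pdown_ne_zero hμ')

/-- The Möbius matrix `[[τ, λ − μ − τ²], [−1, τ]]` taking `(f↑, f↓)` to `(f̃↑, f̃↓)` has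
determinant `λ − μ`, so any common factor of `f̃↑` and `f̃↓` divides `λ − μ`. -/
theorem isCoprime_tildeUp_tildeDown (hQμ : (f.tildeDown τ).eval μ ≠ 0) :
    IsCoprime (f.tildeUp μ τ) (f.tildeDown τ) := by
  obtain ⟨u, v, huv⟩ := f.isCoprime_pup_pdown
  obtain ⟨a, b, hab⟩ := isCoprime_X_sub_C_of_eval_ne_zero hQμ
  have hdet : (u * C τ + v) * f.tildeUp μ τ
      + (v * C τ - u * (X - C μ - C (τ ^ 2))) * f.tildeDown τ = X - C μ := by
    rw [tildeUp, tildeDown, C_pow]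
    linear_combination (X - C μ) * huv
  exact ⟨a * (u * C τ + v), a * (v * C τ - u * (X - C μ - C (τ ^ 2))) + b, by
    linear_combination a * hdet + hab⟩

theorem X_sub_C_sub_C_eq (μ τ : ℝ) : (X - C μ - C (τ ^ 2) : ℝ[X]) = X - C (μ + τ ^ 2) := by
  rw [C_add]
  ring

theorem degree_X_sub_C_sub_C_mul_pdown :
    ((X - C μ - C (τ ^ 2)) * f.pdown).degree = ↑(f.d + 1) := by
  rw [X_sub_C_sub_C_eq, degree_mul, degree_X_sub_C, degree_pdown, add_comm]
  rfl

theorem pairLeadingCoeff_tilde_of_pos (h : 0 < f.h0) :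
    pairLeadingCoeff (f.tildeUp μ τ) (f.tildeDown τ) = (-1) ^ (f.tildeDown τ).natDegree := by
  have hlt : (C τ * f.pdown).degree < (-f.pup).degree := by
    rw [degree_neg, degree_pup_of_pos f h]
    exact (degree_C_mul_le _ _).trans_lt (by rw [degree_pdown]; exact_mod_cast f.d.lt_succ_self)
  have hdeg : (f.tildeDown τ).degree = ↑(f.d + 1) := by
    rw [tildeDown, degree_add_eq_left_of_degree_lt hlt, degree_neg, degree_pup_of_pos f h]
  have hup : (f.tildeUp μ τ).degree ≤ ↑(f.d + 1) := by
    refine (degree_add_le _ _).trans (max_le ?_ ?_)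
    · exact (degree_C_mul_le _ _).trans (degree_pup_of_pos f h).le
    · exact degree_X_sub_C_sub_C_mul_pdown.le
  rw [pairLeadingCoeff, if_neg (not_lt.mpr (hdeg ▸ hup)), natDegree_eq_of_degree_eq_some hdeg,
    tildeDown, leadingCoeff_add_of_degree_lt' hlt, leadingCoeff_neg, leadingCoeff_pup_of_pos f h,
    pow_succ]
  ring

theorem pairLeadingCoeff_tilde_of_h0_eq_zero (h : f.h0 = 0) (hτ : f.h < τ) :
    pairLeadingCoeff (f.tildeUp μ τ) (f.tildeDown τ) = (-1) ^ (f.tildeDown τ).natDegree := by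
  have hdown : f.tildeDown τ = C (τ - f.h) * f.pdown - f.residuePart := by
    rw [tildeDown, pup_eq_of_h0_eq_zero f h, C_sub]
    ring
  have hmain : (C (τ - f.h) * f.pdown).degree = f.d := by
    rw [degree_C_mul (sub_ne_zero.mpr hτ.ne'), degree_pdown]
  have hdeg : (f.tildeDown τ).degree = f.d := by
    rw [hdown, degree_sub_eq_left_of_degree_lt (hmain ▸ f.degree_residuePart_lt), hmain]
  have hlt : (C τ * f.pup).degree < ((X - C μ - C (τ ^ 2)) * f.pdown).degree := by
    rw [degree_X_sub_C_sub_C_mul_pdown]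
    exact (degree_C_mul_le _ _).trans_lt ((degree_pup_le_of_h0_eq_zero f h).trans_lt
      (by exact_mod_cast f.d.lt_succ_self))
  have hup : (f.tildeUp μ τ).degree = ↑(f.d + 1) := by
    rw [tildeUp, degree_add_eq_right_of_degree_lt hlt, degree_X_sub_C_sub_C_mul_pdown]
  rw [pairLeadingCoeff, if_pos (by rw [hdeg, hup]; exact_mod_cast f.d.lt_succ_self),
    natDegree_eq_of_degree_eq_some hdeg, tildeUp, leadingCoeff_add_of_degree_lt hlt,
    leadingCoeff_mul, X_sub_C_sub_C_eq, (monic_X_sub_C _).leadingCoeff, one_mul, leadingCoeff_pdown,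
    h0'_eq_one_of_h0_eq_zero f h, one_mul]

theorem pairLeadingCoeff_tildeUp_tildeDown (hμ : ∀ k, μ < f.pole k) (hτ : f.eval μ < τ) :
    pairLeadingCoeff (f.tildeUp μ τ) (f.tildeDown τ) = (-1) ^ (f.tildeDown τ).natDegree := by
  rcases f.h0_nonneg.lt_or_eq with h | h
  · exact pairLeadingCoeff_tilde_of_pos h
  · refine pairLeadingCoeff_tilde_of_h0_eq_zero h.symm (lt_of_le_of_lt ?_ hτ)
    simpa [← h] using f.add_le_eval hμ

variable {g : RHN}

theorem pup_mul_tildeDown (hQ : f.tildeDown τ ≠ 0)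
    (hg : ∀ x : ℝ, (∀ k, x ≠ f.pole k) → (∀ k, x ≠ g.pole k) → f.eval x ≠ τ →
      g.eval x = (μ - x) / (f.eval x - τ) - τ) :
    g.pup * f.tildeDown τ = f.tildeUp μ τ * g.pdown := by
  have hfin : (Set.range f.pole ∪ Set.range g.pole ∪ {x | (f.tildeDown τ).IsRoot x}).Finite :=
    ((Set.finite_range _).union (Set.finite_range _)).union (finite_setOfPred_isRoot hQ)
  refine eq_of_infinite_eval_eq _ _ (hfin.infinite_compl.mono fun x hx => ?_)
  simp only [Set.mem_compl_iff, Set.mem_union, Set.mem_range, Set.mem_ofPred_eq, not_or,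
    not_exists, IsRoot] at hx
  obtain ⟨⟨hxf, hxg⟩, hxQ⟩ := hx
  have hxf' : ∀ k, x ≠ f.pole k := fun k => Ne.symm (hxf k)
  have hxg' : ∀ k, x ≠ g.pole k := fun k => Ne.symm (hxg k)
  rw [eval_tildeDown hxf'] at hxQ
  have hfx : f.eval x - τ ≠ 0 := fun h => hxQ (by rw [← neg_sub, h, neg_zero, zero_mul])
  show (g.pup * f.tildeDown τ).eval x = (f.tildeUp μ τ * g.pdown).eval x
  rw [eval_mul, eval_mul, g.eval_pup hxg', hg x hxf' hxg' (sub_ne_zero.mp hfx),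
    eval_tildeDown hxf', eval_tildeUp hxf']
  field_simp
  ring

end RHN

open Polynomial in
/-- if `g` represents `f̃(λ) = (μ − λ)/(f(λ) − τ) − τ` with `μ` below the
smallest pole of `f` and `τ > f(μ)`, then `f̃↑ = τ f↑ + (λ − μ − τ²) f↓` and
`f̃↓ = −f↑ + τ f↓`. -/
theorem tilde_transform_up_down (f g : RHN) (μ τ : ℝ)
    (hμ : ∀ k, μ < f.pole k) (hτ : f.eval μ < τ)
    (hg : ∀ x : ℝ, (∀ k, x ≠ f.pole k) → (∀ k, x ≠ g.pole k) → f.eval x ≠ τ →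
      g.eval x = (μ - x) / (f.eval x - τ) - τ) :
    g.pup = C τ * f.pup + (X - C μ - C (τ ^ 2)) * f.pdown ∧
    g.pdown = -f.pup + C τ * f.pdown := by
  have hQμ := RHN.eval_tildeDown_ne_zero hμ hτ
  have hQ : f.tildeDown τ ≠ 0 := fun h => hQμ (by rw [h, eval_zero])
  exact eq_of_isCoprime_of_pairLeadingCoeff (RHN.isCoprime_tildeUp_tildeDown hQμ)
    g.isCoprime_pup_pdown hQ (RHN.pup_mul_tildeDown hQ hg)
    (RHN.pairLeadingCoeff_tildeUp_tildeDown hμ hτ) g.pairLeadingCoeff_pup_pdown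
end
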